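/- arXiv:1502.01359 — 3 statements merged into one kernel-verified Lean document; each statement's English description precedes it below -/
import Mathlib

section
/- (Reconstruction functions for degraded random variables.) Let (X,Y,Z) be random variables taking values in finite sets and satisfying the Markov chain X −∘− Y −∘− Z. Let X̂ be a finite set, d: 𝒳×X̂ → [0,∞) an arbitrary nonnegative distortion function, and f: 𝒴×𝒵 → X̂ an arbitrary function. Then there exists a function g*: 𝒴 → X̂ such that E[d(X, g*(Y))] ≤ E[d(X, f(Y,Z))]. -/
noncomputable section

namespace IT

variable {Ω : Type*} [Fintype Ω]

open Classical in
/-- Probability of an event under a weight function on a finite sample space. -/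
def pr (w : Ω → ℝ) (E : Ω → Prop) : ℝ := ∑ ω, if E ω then w ω else 0

open Classical in
/-- The distribution (pmf) of a random variable. -/
def dist (w : Ω → ℝ) {α : Type*} [Fintype α] (X : Ω → α) (a : α) : ℝ :=
  ∑ ω, if X ω = a then w ω else 0

/-- Shannon entropy (base 2). -/
def H (w : Ω → ℝ) {α : Type*} [Fintype α] (X : Ω → α) : ℝ :=
  -∑ a, dist w X a * Real.logb 2 (dist w X a)

/-- Conditional entropy H(X|Y). -/
def condH (w : Ω → ℝ) {α β : Type*} [Fintype α] [Fintype β] (X : Ω → α) (Y : Ω → β) : ℝ :=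
  H w (fun ω => (X ω, Y ω)) - H w Y

/-- Mutual information I(X;Y). -/
def mutInfo (w : Ω → ℝ) {α β : Type*} [Fintype α] [Fintype β] (X : Ω → α) (Y : Ω → β) : ℝ :=
  H w X + H w Y - H w (fun ω => (X ω, Y ω))

/-- Conditional mutual information I(X;Y|Z). -/
def condMutInfo (w : Ω → ℝ) {α β γ : Type*} [Fintype α] [Fintype β] [Fintype γ]
    (X : Ω → α) (Y : Ω → β) (Z : Ω → γ) : ℝ :=
  condH w X Z - condH w X (fun ω => (Y ω, Z ω))

/-- Expectation of a real random variable. -/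
def expect (w : Ω → ℝ) (f : Ω → ℝ) : ℝ := ∑ ω, w ω * f ω

end IT

/-- `p` is a probability mass function on a finite type. -/
def IsPMF {α : Type*} [Fintype α] (p : α → ℝ) : Prop := (∀ a, 0 ≤ p a) ∧ ∑ a, p a = 1

/-- The i.i.d. (product) weight on `n`-sequences induced by a single-letter pmf. -/
def iidW {α : Type*} (p : α → ℝ) (n : ℕ) : (Fin n → α) → ℝ := fun x => ∏ t, p (x t)

/-- The first `l` components of a dependent tuple (the rest masked). -/
def trunc {K : ℕ} {γ : Fin K → Type*} (l : ℕ) (f : (k : Fin K) → γ k) :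
    (k : Fin K) → Option (γ k) :=
  fun k => if k.val < l then some (f k) else none

/-- Coordinates with (0-based) index `< t`. -/
def below {n : ℕ} {α : Type*} (t : ℕ) (x : Fin n → α) : Fin n → Option α :=
  fun s => if s.val < t then some (x s) else none

/-- Coordinates with (0-based) index `> t`. -/
def above {n : ℕ} {α : Type*} (t : ℕ) (x : Fin n → α) : Fin n → Option α :=
  fun s => if t < s.val then some (x s) else none

/-- Coordinates with (0-based) index `≥ t`. -/
def fromIdx {n : ℕ} {α : Type*} (t : ℕ) (x : Fin n → α) : Fin n → Option α :=
  fun s => if t ≤ s.val then some (x s) else none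

open Classical in
/-- Number of occurrences of `a` in the sequence `x`. -/
def Nocc {n : ℕ} {α : Type*} (a : α) (x : Fin n → α) : ℕ :=
  (Finset.univ.filter fun t => x t = a).card

/-- Strongly typical set. -/
def typical {α : Type*} [Fintype α] (Q : α → ℝ) (δ : ℝ) (n : ℕ) : Set (Fin n → α) :=
  {x | ∀ a, Q a ≠ 0 → |(Nocc a x : ℝ) / n - Q a| ≤ δ / Fintype.card α}


open IT

lemma gibbs_eq {ι : Type} [Fintype ι] (p q : ι → ℝ)
    (hp : ∀ i, 0 ≤ p i) (hq : ∀ i, 0 ≤ q i)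
    (hpq : ∀ i, p i ≠ 0 → 0 < q i)
    (hsum : ∑ i, q i = ∑ i, p i)
    (hkl : ∑ i, p i * Real.logb 2 (p i / q i) = 0) :
    ∀ i, p i = q i := by
  classical
  -- convert to natural log
  have hkl' : ∑ i, p i * Real.log (q i / p i) = 0 := by
    have h2 : Real.log 2 ≠ 0 := by
      have := Real.log_pos (by norm_num : (1:ℝ) < 2); linarith
    have : ∑ i, p i * Real.log (q i / p i) = -(Real.log 2 * ∑ i, p i * Real.logb 2 (p i / q i)) := by
      rw [Finset.mul_sum, ← Finset.sum_neg_distrib]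
      refine Finset.sum_congr rfl fun i _ => ?_
      by_cases hpi : p i = 0
      · simp [hpi]
      · have hpi' : 0 < p i := lt_of_le_of_ne (hp i) (Ne.symm hpi)
        have hqi := hpq i hpi
        rw [Real.logb, Real.log_div hpi (ne_of_gt hqi), Real.log_div (ne_of_gt hqi) hpi]
        field_simp
        ring
    rw [this, hkl]; simp
  set K : ι → ℝ := fun i => (q i - p i) - p i * Real.log (q i / p i) with hK
  have hK0 : ∀ i, 0 ≤ K i := by
    intro i
    by_cases hpi : p i = 0
    · simp [hK, hpi, hq i]
    · have hpi' : 0 < p i := lt_of_le_of_ne (hp i) (Ne.symm hpi)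
      have hqi := hpq i hpi
      have hlog : Real.log (q i / p i) ≤ q i / p i - 1 :=
        Real.log_le_sub_one_of_pos (div_pos hqi hpi')
      have := mul_le_mul_of_nonneg_left hlog (le_of_lt hpi')
      have h2 : p i * (q i / p i - 1) = q i - p i := by field_simp
      simp only [hK]
      nlinarith
  have hKsum : ∑ i, K i = 0 := by
    simp only [hK]
    rw [Finset.sum_sub_distrib, Finset.sum_sub_distrib, hsum, hkl']
    ring
  have hKz : ∀ i ∈ Finset.univ, K i = 0 :=
    (Finset.sum_eq_zero_iff_of_nonneg (fun i _ => hK0 i)).1 hKsum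
  intro i
  have hKi := hKz i (Finset.mem_univ i)
  by_cases hpi : p i = 0
  · -- K i = q i
    simp [hK, hpi] at hKi
    rw [hpi, ← hKi]
  · have hpi' : 0 < p i := lt_of_le_of_ne (hp i) (Ne.symm hpi)
    have hqi := hpq i hpi
    by_contra hne
    have hr : q i / p i ≠ 1 := by
      intro h1
      exact hne ((div_eq_one_iff_eq (ne_of_gt hpi')).1 h1).symm
    have hlog : Real.log (q i / p i) < q i / p i - 1 :=
      Real.log_lt_sub_one_of_pos (div_pos hqi hpi') hr
    have := mul_lt_mul_of_pos_left hlog hpi'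
    have h2 : p i * (q i / p i - 1) = q i - p i := by field_simp
    simp only [hK] at hKi
    nlinarith

section helpers
variable {Ω : Type*} [Fintype Ω] {α β γ : Type*} [Fintype α] [Fintype β] [Fintype γ]

lemma dist_nonneg' (w : Ω → ℝ) (hw : ∀ ω, 0 ≤ w ω) (X : Ω → α) (a : α) : 0 ≤ IT.dist w X a := by
  classical
  refine Finset.sum_nonneg fun ω _ => ?_
  split
  · exact hw ω
  · exact le_refl 0

lemma sum_dist (w : Ω → ℝ) (X : Ω → α) : ∑ a, IT.dist w X a = ∑ ω, w ω := by
  classical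
  unfold IT.dist
  rw [Finset.sum_comm]
  exact Finset.sum_congr rfl fun ω _ => by simp

lemma expect_comp (w : Ω → ℝ) (X : Ω → α) (F : α → ℝ) :
    IT.expect w (fun ω => F (X ω)) = ∑ a, IT.dist w X a * F a := by
  classical
  unfold IT.expect IT.dist
  simp only [Finset.sum_mul, ite_mul, zero_mul]
  rw [Finset.sum_comm]
  exact Finset.sum_congr rfl fun ω _ => by simp

lemma marg_snd (w : Ω → ℝ) (X : Ω → α) (Y : Ω → β) (x : α) :
    ∑ y, IT.dist w (fun ω => (X ω, Y ω)) (x, y) = IT.dist w X x := by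
  classical
  unfold IT.dist
  rw [Finset.sum_comm]
  refine Finset.sum_congr rfl fun ω _ => ?_
  simp [Prod.ext_iff, ite_and]

lemma marg_fst (w : Ω → ℝ) (X : Ω → α) (Y : Ω → β) (y : β) :
    ∑ x, IT.dist w (fun ω => (X ω, Y ω)) (x, y) = IT.dist w Y y := by
  classical
  unfold IT.dist
  rw [Finset.sum_comm]
  refine Finset.sum_congr rfl fun ω _ => ?_
  simp [Prod.ext_iff, ite_and]

lemma H_comp_inj (w : Ω → ℝ) (X : Ω → α) (e : α → β) (he : Function.Injective e) :
    IT.H w (fun ω => e (X ω)) = IT.H w X := by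
  classical
  unfold IT.H
  congr 1
  rw [← Finset.sum_subset (Finset.subset_univ ((Finset.univ : Finset α).image e))]
  · rw [Finset.sum_image (fun a _ b _ h => he h)]
    refine Finset.sum_congr rfl fun a _ => ?_
    have : IT.dist w (fun ω => e (X ω)) (e a) = IT.dist w X a := by
      unfold IT.dist
      exact Finset.sum_congr rfl fun ω _ => by simp [he.eq_iff]
    rw [this]
  · intro b _ hb
    have : IT.dist w (fun ω => e (X ω)) b = 0 := by
      unfold IT.dist
      refine Finset.sum_eq_zero fun ω _ => ?_
      rw [if_neg]
      intro h
      exact hb (Finset.mem_image.2 ⟨X ω, Finset.mem_univ _, h⟩)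
    simp [this]

end helpers

section marg3
variable {Ω : Type*} [Fintype Ω] {α β γ : Type*} [Fintype α] [Fintype β] [Fintype γ]
variable (w : Ω → ℝ) (X : Ω → α) (Y : Ω → β) (Z : Ω → γ)

lemma marg3_XY (x : α) (y : β) :
    IT.dist w (fun ω => (X ω, Y ω)) (x, y) = ∑ z, IT.dist w (fun ω => (X ω, Y ω, Z ω)) (x, y, z) := by
  classical
  unfold IT.dist
  rw [Finset.sum_comm]
  refine Finset.sum_congr rfl fun ω _ => ?_
  simp [Prod.ext_iff, ite_and]

lemma marg3_YZ (y : β) (z : γ) :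
    IT.dist w (fun ω => (Y ω, Z ω)) (y, z) = ∑ x, IT.dist w (fun ω => (X ω, Y ω, Z ω)) (x, y, z) := by
  classical
  unfold IT.dist
  rw [Finset.sum_comm]
  refine Finset.sum_congr rfl fun ω _ => ?_
  simp [Prod.ext_iff, ite_and]

lemma marg3_Y (y : β) :
    IT.dist w Y y = ∑ x, ∑ z, IT.dist w (fun ω => (X ω, Y ω, Z ω)) (x, y, z) := by
  rw [← marg_fst w X Y y]
  exact Finset.sum_congr rfl fun x _ => marg3_XY w X Y Z x y

end marg3


lemma sum3 {A B C : Type} [Fintype A] [Fintype B] [Fintype C] (f : A × B × C → ℝ) :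
    ∑ i, f i = ∑ a, ∑ b, ∑ c, f (a, b, c) := by
  rw [Fintype.sum_prod_type]
  exact Finset.sum_congr rfl fun a _ => Fintype.sum_prod_type (f := fun y => f (a, y))

set_option maxHeartbeats 1000000 in
lemma markov_of_cmi_zero {Ω 𝒳 𝒴 𝒵 : Type} [Fintype Ω] [Fintype 𝒳] [Fintype 𝒴] [Fintype 𝒵]
    (w : Ω → ℝ) (hw : IsPMF w)
    (X : Ω → 𝒳) (Y : Ω → 𝒴) (Z : Ω → 𝒵)
    (hmc : IT.condMutInfo w X Z Y = 0) :
    ∀ x y z, IT.dist w (fun ω => (X ω, Y ω, Z ω)) (x, y, z) * IT.dist w Y y =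
      IT.dist w (fun ω => (X ω, Y ω)) (x, y) * IT.dist w (fun ω => (Y ω, Z ω)) (y, z) := by
  classical
  set p : 𝒳 × 𝒴 × 𝒵 → ℝ := IT.dist w (fun ω => (X ω, Y ω, Z ω)) with hpdef
  set PXY : 𝒳 → 𝒴 → ℝ := fun x y => ∑ z, p (x, y, z) with hPXYdef
  set PYZ : 𝒴 → 𝒵 → ℝ := fun y z => ∑ x, p (x, y, z) with hPYZdef
  set PY : 𝒴 → ℝ := fun y => ∑ x, ∑ z, p (x, y, z) with hPYdef
  have hp0 : ∀ i, 0 ≤ p i := fun i => dist_nonneg' w hw.1 _ i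
  have hpsum : ∑ i, p i = 1 := by rw [hpdef, sum_dist]; exact hw.2
  -- entropy expansions
  have eXY : IT.H w (fun ω => (X ω, Y ω)) =
      -∑ x, ∑ y, ∑ z, p (x, y, z) * Real.logb 2 (PXY x y) := by
    rw [IT.H, Fintype.sum_prod_type]
    congr 1
    refine Finset.sum_congr rfl fun x _ => Finset.sum_congr rfl fun y _ => ?_
    rw [marg3_XY w X Y Z x y, Finset.sum_mul]
  have eY : IT.H w Y = -∑ y, ∑ x, ∑ z, p (x, y, z) * Real.logb 2 (PY y) := by
    rw [IT.H]
    congr 1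
    refine Finset.sum_congr rfl fun y _ => ?_
    rw [marg3_Y w X Y Z y, Finset.sum_mul]
    refine Finset.sum_congr rfl fun x _ => ?_
    rw [Finset.sum_mul]
  have eYZ : IT.H w (fun ω => (Y ω, Z ω)) =
      -∑ y, ∑ z, ∑ x, p (x, y, z) * Real.logb 2 (PYZ y z) := by
    rw [IT.H, Fintype.sum_prod_type]
    congr 1
    refine Finset.sum_congr rfl fun y _ => Finset.sum_congr rfl fun z _ => ?_
    rw [marg3_YZ w X Y Z y z, Finset.sum_mul]
  have eW : IT.H w (fun ω => (X ω, Y ω, Z ω)) =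
      -∑ x, ∑ y, ∑ z, p (x, y, z) * Real.logb 2 (p (x, y, z)) := by
    rw [IT.H, Fintype.sum_prod_type]
    congr 1
    exact Finset.sum_congr rfl fun x _ =>
      Fintype.sum_prod_type (f := fun i : 𝒴 × 𝒵 => p (x, i.1, i.2) * Real.logb 2 (p (x, i.1, i.2)))
  have hswap1 : IT.H w (fun ω => (X ω, Z ω, Y ω)) = IT.H w (fun ω => (X ω, Y ω, Z ω)) := by
    have he : Function.Injective (fun i : 𝒳 × 𝒴 × 𝒵 => (i.1, i.2.2, i.2.1)) := by
      rintro ⟨a, b, c⟩ ⟨a', b', c'⟩ h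
      simp only [Prod.ext_iff] at h ⊢
      tauto
    exact H_comp_inj w (fun ω => (X ω, Y ω, Z ω)) _ he
  have hswap2 : IT.H w (fun ω => (Z ω, Y ω)) = IT.H w (fun ω => (Y ω, Z ω)) :=
    H_comp_inj w (fun ω => (Y ω, Z ω)) Prod.swap Prod.swap_injective
  have hI : IT.condMutInfo w X Z Y =
      ∑ x, ∑ y, ∑ z, p (x, y, z) * (Real.logb 2 (p (x, y, z)) + Real.logb 2 (PY y)
        - Real.logb 2 (PXY x y) - Real.logb 2 (PYZ y z)) := by
    simp only [IT.condMutInfo, IT.condH]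
    rw [hswap1, hswap2, eXY, eY, eYZ, eW]
    have hSY : (∑ y, ∑ x, ∑ z, p (x, y, z) * Real.logb 2 (PY y)) =
        ∑ x, ∑ y, ∑ z, p (x, y, z) * Real.logb 2 (PY y) := Finset.sum_comm
    have hSYZ : (∑ y, ∑ z, ∑ x, p (x, y, z) * Real.logb 2 (PYZ y z)) =
        ∑ x, ∑ y, ∑ z, p (x, y, z) * Real.logb 2 (PYZ y z) := by
      calc (∑ y, ∑ z, ∑ x, p (x, y, z) * Real.logb 2 (PYZ y z))
          = ∑ y, ∑ x, ∑ z, p (x, y, z) * Real.logb 2 (PYZ y z) :=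
            Finset.sum_congr rfl fun y _ => Finset.sum_comm
        _ = ∑ x, ∑ y, ∑ z, p (x, y, z) * Real.logb 2 (PYZ y z) := Finset.sum_comm
    rw [hSY, hSYZ]
    simp only [mul_add, mul_sub, Finset.sum_add_distrib, Finset.sum_sub_distrib]
    ring
  -- marginal positivity / domination facts
  have hPXY0 : ∀ x y, 0 ≤ PXY x y := fun x y => Finset.sum_nonneg fun z _ => hp0 _
  have hPYZ0 : ∀ y z, 0 ≤ PYZ y z := fun y z => Finset.sum_nonneg fun x _ => hp0 _
  have hPY0 : ∀ y, 0 ≤ PY y := fun y =>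
    Finset.sum_nonneg fun x _ => Finset.sum_nonneg fun z _ => hp0 _
  have hle_XY : ∀ x y z, p (x, y, z) ≤ PXY x y := fun x y z =>
    Finset.single_le_sum (fun z _ => hp0 (x, y, z)) (Finset.mem_univ z)
  have hle_YZ : ∀ x y z, p (x, y, z) ≤ PYZ y z := fun x y z =>
    Finset.single_le_sum (fun x _ => hp0 (x, y, z)) (Finset.mem_univ x)
  have hXYle_Y : ∀ x y, PXY x y ≤ PY y := fun x y =>
    Finset.single_le_sum (f := fun x' => PXY x' y) (fun x' _ => hPXY0 x' y) (Finset.mem_univ x)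
  have hle_Y : ∀ x y z, p (x, y, z) ≤ PY y := fun x y z =>
    le_trans (hle_XY x y z) (hXYle_Y x y)
  have hmargx : ∀ y, ∑ x, PXY x y = PY y := fun y => rfl
  have hmargz : ∀ y, ∑ z, PYZ y z = PY y := fun y => Finset.sum_comm
  -- the product reference measure
  set q : 𝒳 × 𝒴 × 𝒵 → ℝ :=
    fun i => if PY i.2.1 = 0 then 0 else PXY i.1 i.2.1 * PYZ i.2.1 i.2.2 / PY i.2.1 with hqdef
  have hq0 : ∀ i, 0 ≤ q i := by
    intro i
    simp only [hqdef]
    split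
    · exact le_refl 0
    · exact div_nonneg (mul_nonneg (hPXY0 _ _) (hPYZ0 _ _)) (hPY0 _)
  have hqpos : ∀ i, p i ≠ 0 → 0 < q i := by
    rintro ⟨x, y, z⟩ hp
    have hppos : 0 < p (x, y, z) := (hp0 _).lt_of_ne (Ne.symm hp)
    have hy : 0 < PY y := lt_of_lt_of_le hppos (hle_Y x y z)
    have hxy : 0 < PXY x y := lt_of_lt_of_le hppos (hle_XY x y z)
    have hyz : 0 < PYZ y z := lt_of_lt_of_le hppos (hle_YZ x y z)
    simp only [hqdef, if_neg (ne_of_gt hy)]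
    positivity
  have hqsum : ∑ i, q i = ∑ i, p i := by
    rw [sum3 q, sum3 p]
    rw [Finset.sum_comm]
    rw [show (∑ x, ∑ y, ∑ z, p (x, y, z)) = ∑ y, ∑ x, ∑ z, p (x, y, z) from Finset.sum_comm]
    refine Finset.sum_congr rfl fun y _ => ?_
    by_cases hy : PY y = 0
    · simp only [hqdef, if_pos hy, Finset.sum_const_zero]
      exact hy.symm
    · simp only [hqdef, if_neg hy]
      have hstep : ∀ x, (∑ z, PXY x y * PYZ y z / PY y) = PXY x y * PY y / PY y := by
        intro x
        rw [← Finset.sum_div, ← Finset.mul_sum, hmargz]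
      simp only [hstep]
      rw [show (∑ x, PXY x y * PY y / PY y) = (∑ x, PXY x y) * PY y / PY y by
        rw [← Finset.sum_div, ← Finset.sum_mul]]
      rw [hmargx]
      field_simp
  have hterm : ∀ x y z, p (x, y, z) * (Real.logb 2 (p (x, y, z)) + Real.logb 2 (PY y)
      - Real.logb 2 (PXY x y) - Real.logb 2 (PYZ y z)) =
      p (x, y, z) * Real.logb 2 (p (x, y, z) / q (x, y, z)) := by
    intro x y z
    by_cases hp : p (x, y, z) = 0
    · simp [hp]
    · have hppos : 0 < p (x, y, z) := (hp0 _).lt_of_ne (Ne.symm hp)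
      have hy : 0 < PY y := lt_of_lt_of_le hppos (hle_Y x y z)
      have hxy : 0 < PXY x y := lt_of_lt_of_le hppos (hle_XY x y z)
      have hyz : 0 < PYZ y z := lt_of_lt_of_le hppos (hle_YZ x y z)
      have hq : q (x, y, z) = PXY x y * PYZ y z / PY y := by
        simp only [hqdef, if_neg (ne_of_gt hy)]
      congr 1
      rw [hq, div_div_eq_mul_div, Real.logb_div (by positivity) (by positivity),
        Real.logb_mul hp (by positivity), Real.logb_mul (by positivity) (by positivity)]
      ring
  have hkl : ∑ i, p i * Real.logb 2 (p i / q i) = 0 := by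
    rw [sum3]
    calc (∑ x, ∑ y, ∑ z, p (x, y, z) * Real.logb 2 (p (x, y, z) / q (x, y, z)))
        = ∑ x, ∑ y, ∑ z, p (x, y, z) * (Real.logb 2 (p (x, y, z)) + Real.logb 2 (PY y)
            - Real.logb 2 (PXY x y) - Real.logb 2 (PYZ y z)) := by
          refine Finset.sum_congr rfl fun x _ => Finset.sum_congr rfl fun y _ =>
            Finset.sum_congr rfl fun z _ => (hterm x y z).symm
      _ = 0 := by rw [← hI]; exact hmc
  have heq : ∀ i, p i = q i := gibbs_eq p q hp0 hq0 hqpos hqsum hkl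
  -- conclude
  intro x y z
  rw [marg3_Y w X Y Z y, marg3_XY w X Y Z x y, marg3_YZ w X Y Z y z]
  show p (x, y, z) * PY y = PXY x y * PYZ y z
  by_cases hy : PY y = 0
  · have h1 : PXY x y = 0 := le_antisymm (hy ▸ hXYle_Y x y) (hPXY0 x y)
    have h2 : p (x, y, z) = 0 := le_antisymm (hy ▸ hle_Y x y z) (hp0 _)
    rw [h1, h2]
    ring
  · have := heq (x, y, z)
    simp only [hqdef, if_neg hy] at this
    rw [this]
    field_simp


/-- **Reconstruction functions for degraded random variables.**  If `X -∘- Y -∘- Z` is a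
Markov chain, then any reconstruction of `X` from `(Y,Z)` can be replaced by one based
on `Y` alone without increasing the expected distortion. -/
theorem reconstruction_for_degraded
    {Ω 𝒳 𝒴 𝒵 Xh : Type} [Fintype Ω] [Fintype 𝒳] [Fintype 𝒴] [Fintype 𝒵] [Fintype Xh]
    [Nonempty Xh]
    (w : Ω → ℝ) (hw : IsPMF w)
    (X : Ω → 𝒳) (Y : Ω → 𝒴) (Z : Ω → 𝒵)
    -- Markov chain X -∘- Y -∘- Z, i.e. I(X;Z|Y) = 0
    (hmc : IT.condMutInfo w X Z Y = 0)
    (d : 𝒳 → Xh → ℝ) (hd : ∀ x y, 0 ≤ d x y)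
    (f : 𝒴 → 𝒵 → Xh) :
    ∃ g : 𝒴 → Xh,
      IT.expect w (fun ω => d (X ω) (g (Y ω))) ≤
        IT.expect w (fun ω => d (X ω) (f (Y ω) (Z ω))) := by
  classical
  have hmkv := markov_of_cmi_zero w hw X Y Z hmc
  set p : 𝒳 × 𝒴 × 𝒵 → ℝ := IT.dist w (fun ω => (X ω, Y ω, Z ω)) with hpdef
  set PXY : 𝒳 → 𝒴 → ℝ := fun x y => ∑ z, p (x, y, z) with hPXYdef
  set PYZ : 𝒴 → 𝒵 → ℝ := fun y z => ∑ x, p (x, y, z) with hPYZdef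
  set PY : 𝒴 → ℝ := fun y => ∑ x, ∑ z, p (x, y, z) with hPYdef
  have hp0 : ∀ i, 0 ≤ p i := fun i => dist_nonneg' w hw.1 _ i
  have hPXY0 : ∀ x y, 0 ≤ PXY x y := fun x y => Finset.sum_nonneg fun z _ => hp0 _
  have hPYZ0 : ∀ y z, 0 ≤ PYZ y z := fun y z => Finset.sum_nonneg fun x _ => hp0 _
  have hPY0 : ∀ y, 0 ≤ PY y := fun y =>
    Finset.sum_nonneg fun x _ => Finset.sum_nonneg fun z _ => hp0 _
  have hXYle_Y : ∀ x y, PXY x y ≤ PY y := fun x y =>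
    Finset.single_le_sum (f := fun x' => PXY x' y) (fun x' _ => hPXY0 x' y) (Finset.mem_univ x)
  have hmargz : ∀ y, ∑ z, PYZ y z = PY y := fun y => Finset.sum_comm
  have hmkv' : ∀ x y z, p (x, y, z) * PY y = PXY x y * PYZ y z := by
    intro x y z
    have h := hmkv x y z
    rwa [marg3_Y w X Y Z y, marg3_XY w X Y Z x y, marg3_YZ w X Y Z y z] at h
  have hnZ : Nonempty 𝒵 := by
    by_contra h
    rw [not_nonempty_iff] at h
    have hΩ : IsEmpty Ω := ⟨fun ω => h.false (Z ω)⟩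
    have h2 := hw.2
    rw [Finset.univ_eq_empty, Finset.sum_empty] at h2
    norm_num at h2
  set A : 𝒴 → Xh → ℝ := fun y a => ∑ x, PXY x y * d x a with hAdef
  have hgex : ∀ y : 𝒴, ∃ z0 : 𝒵, ∀ z, A y (f y z0) ≤ A y (f y z) := by
    intro y
    obtain ⟨z0, _, hz0⟩ := Finset.exists_min_image Finset.univ (fun z => A y (f y z))
      ⟨Classical.arbitrary 𝒵, Finset.mem_univ _⟩
    exact ⟨z0, fun z => hz0 z (Finset.mem_univ z)⟩
  choose zopt hzopt using hgex
  refine ⟨fun y => f y (zopt y), ?_⟩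
  show IT.expect w (fun ω => d (X ω) (f (Y ω) (zopt (Y ω)))) ≤
      IT.expect w (fun ω => d (X ω) (f (Y ω) (Z ω)))
  have hEg : IT.expect w (fun ω => d (X ω) (f (Y ω) (zopt (Y ω)))) =
      ∑ y, A y (f y (zopt y)) := by
    rw [show IT.expect w (fun ω => d (X ω) (f (Y ω) (zopt (Y ω)))) =
        ∑ a : 𝒳 × 𝒴, IT.dist w (fun ω => (X ω, Y ω)) a * d a.1 (f a.2 (zopt a.2)) from
      expect_comp w (fun ω => (X ω, Y ω)) (fun a => d a.1 (f a.2 (zopt a.2)))]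
    rw [Fintype.sum_prod_type]
    calc (∑ x, ∑ y, IT.dist w (fun ω => (X ω, Y ω)) (x, y) * d x (f y (zopt y)))
        = ∑ x, ∑ y, PXY x y * d x (f y (zopt y)) := by
          refine Finset.sum_congr rfl fun x _ => Finset.sum_congr rfl fun y _ => ?_
          rw [marg3_XY w X Y Z x y]
      _ = ∑ y, ∑ x, PXY x y * d x (f y (zopt y)) := Finset.sum_comm
      _ = ∑ y, A y (f y (zopt y)) := rfl
  have hEf : IT.expect w (fun ω => d (X ω) (f (Y ω) (Z ω))) =
      ∑ y, ∑ z, ∑ x, p (x, y, z) * d x (f y z) := by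
    rw [show IT.expect w (fun ω => d (X ω) (f (Y ω) (Z ω))) =
        ∑ i : 𝒳 × 𝒴 × 𝒵, p i * d i.1 (f i.2.1 i.2.2) from
      expect_comp w (fun ω => (X ω, Y ω, Z ω)) (fun i => d i.1 (f i.2.1 i.2.2))]
    rw [sum3 (fun i => p i * d i.1 (f i.2.1 i.2.2))]
    calc (∑ x, ∑ y, ∑ z, p (x, y, z) * d x (f y z))
        = ∑ y, ∑ x, ∑ z, p (x, y, z) * d x (f y z) := Finset.sum_comm
      _ = ∑ y, ∑ z, ∑ x, p (x, y, z) * d x (f y z) :=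
          Finset.sum_congr rfl fun y _ => Finset.sum_comm
  rw [hEg, hEf]
  refine Finset.sum_le_sum fun y _ => ?_
  by_cases hy : PY y = 0
  · have hPXYz : ∀ x, PXY x y = 0 := fun x => le_antisymm (hy ▸ hXYle_Y x y) (hPXY0 x y)
    have hA : A y (f y (zopt y)) = 0 := by
      simp only [hAdef]
      exact Finset.sum_eq_zero fun x _ => by rw [hPXYz x, zero_mul]
    rw [hA]
    exact Finset.sum_nonneg fun z _ => Finset.sum_nonneg fun x _ =>
      mul_nonneg (hp0 _) (hd _ _)
  · have key : ∀ z, (∑ x, p (x, y, z) * d x (f y z)) = PYZ y z / PY y * A y (f y z) := by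
      intro z
      simp only [hAdef]
      rw [Finset.mul_sum]
      refine Finset.sum_congr rfl fun x _ => ?_
      have hpx : p (x, y, z) = PXY x y * PYZ y z / PY y := by
        rw [eq_div_iff hy]
        exact hmkv' x y z
      rw [hpx]
      ring
    calc A y (f y (zopt y))
        = (∑ z, PYZ y z / PY y) * A y (f y (zopt y)) := by
          rw [← Finset.sum_div, hmargz y, div_self hy, one_mul]
      _ = ∑ z, PYZ y z / PY y * A y (f y (zopt y)) := Finset.sum_mul _ _ _
      _ ≤ ∑ z, PYZ y z / PY y * A y (f y z) :=
          Finset.sum_le_sum fun z _ => mul_le_mul_of_nonneg_left (hzopt y z)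
            (div_nonneg (hPYZ0 y z) (hPY0 y))
      _ = ∑ z, ∑ x, p (x, y, z) * d x (f y z) :=
          Finset.sum_congr rfl fun z _ => (key z).symm
end
end

section
/- (Markov chains induced by interactive encoding of two nodes, item 1.) For every t ∈ {1,…,n}, the Markov chain (J_x^1, X_{[1:t-1]}, Y_{[t+1:n]}) −∘− X_t −∘− (Y_t, Z_t) holds; equivalently, I(J_x^1, X_{[1:t-1]}, Y_{[t+1:n]} ; Y_t, Z_t | X_t) = 0. -/
noncomputable section

open IT

namespace MyAux
open IT
variable {Ω : Type*} [Fintype Ω] {α β γ : Type*} [Fintype α] [Fintype β] [Fintype γ]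

lemma dist_nonneg (w : Ω → ℝ) (hw : ∀ ω, 0 ≤ w ω) (X : Ω → α) (a : α) :
    0 ≤ IT.dist w X a := by
  classical
  refine Finset.sum_nonneg fun ω _ => ?_
  split <;> simp [hw ω]

lemma dist_marg_mid (w : Ω → ℝ) (A : Ω → α) (B : Ω → β) (C : Ω → γ) (a : α) (c : γ) :
    IT.dist w (fun ω => (A ω, C ω)) (a, c)
      = ∑ b, IT.dist w (fun ω => (A ω, B ω, C ω)) (a, b, c) := by
  classical
  unfold IT.dist
  rw [Finset.sum_comm]
  refine Finset.sum_congr rfl fun ω _ => ?_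
  by_cases h : A ω = a ∧ C ω = c
  · simp [Prod.ext_iff, h.1, h.2]
  · rw [if_neg (by simp [Prod.ext_iff]; tauto), Finset.sum_eq_zero]
    intro b _
    rw [if_neg (by simp [Prod.ext_iff]; tauto)]

lemma dist_marg_fst (w : Ω → ℝ) (A : Ω → α) (B : Ω → β) (C : Ω → γ) (b : β) (c : γ) :
    IT.dist w (fun ω => (B ω, C ω)) (b, c)
      = ∑ a, IT.dist w (fun ω => (A ω, B ω, C ω)) (a, b, c) := by
  classical
  unfold IT.dist
  rw [Finset.sum_comm]
  refine Finset.sum_congr rfl fun ω _ => ?_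
  by_cases h : B ω = b ∧ C ω = c
  · simp [Prod.ext_iff, h.1, h.2]
  · rw [if_neg (by simp [Prod.ext_iff]; tauto), Finset.sum_eq_zero]
    intro a _
    rw [if_neg (by simp [Prod.ext_iff]; tauto)]

lemma dist_marg_pair (w : Ω → ℝ) (B : Ω → β) (C : Ω → γ) (c : γ) :
    IT.dist w C c = ∑ b, IT.dist w (fun ω => (B ω, C ω)) (b, c) := by
  classical
  unfold IT.dist
  rw [Finset.sum_comm]
  refine Finset.sum_congr rfl fun ω _ => ?_
  by_cases h : C ω = c
  · simp [Prod.ext_iff, h]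
  · rw [if_neg h, Finset.sum_eq_zero]
    intro b _
    rw [if_neg (by simp [Prod.ext_iff]; tauto)]

lemma sum_dist_mul {ε : Type*} [Fintype ε] (w : Ω → ℝ) (h : Ω → ε) (F : ε → ℝ) :
    ∑ e, IT.dist w h e * F e = ∑ ω, w ω * F (h ω) := by
  classical
  unfold IT.dist
  calc ∑ e, (∑ ω, if h ω = e then w ω else 0) * F e
      = ∑ e, ∑ ω, (if h ω = e then w ω * F e else 0) := by
        refine Finset.sum_congr rfl fun e _ => ?_
        rw [Finset.sum_mul]
        refine Finset.sum_congr rfl fun ω _ => ?_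
        rw [ite_mul, zero_mul]
    _ = ∑ ω, ∑ e, (if h ω = e then w ω * F e else 0) := Finset.sum_comm
    _ = ∑ ω, w ω * F (h ω) := Finset.sum_congr rfl fun ω _ => by simp

lemma sum_dist_comp {δ ε : Type*} [Fintype δ] [Fintype ε] (w : Ω → ℝ)
    (X : Ω → δ) (g : δ → ε) (F : ε → ℝ) :
    ∑ d, IT.dist w X d * F (g d) = ∑ e, IT.dist w (fun ω => g (X ω)) e * F e := by
  calc ∑ d, IT.dist w X d * F (g d) = ∑ ω, w ω * F (g (X ω)) :=
        sum_dist_mul w X (fun d => F (g d))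
    _ = ∑ e, IT.dist w (fun ω => g (X ω)) e * F e :=
        (sum_dist_mul w (fun ω => g (X ω)) F).symm

theorem condMutInfo_eq_zero_of_factor (w : Ω → ℝ) (hw : ∀ ω, 0 ≤ w ω)
    (A : Ω → α) (B : Ω → β) (C : Ω → γ)
    (hfac : ∀ a b c,
      IT.dist w (fun ω => (A ω, B ω, C ω)) (a, b, c) * IT.dist w C c
        = IT.dist w (fun ω => (A ω, C ω)) (a, c)
          * IT.dist w (fun ω => (B ω, C ω)) (b, c)) :
    IT.condMutInfo w A B C = 0 := by
  classical
  set q : α × β × γ → ℝ := IT.dist w (fun ω => (A ω, B ω, C ω)) with hq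
  set qAC : α × γ → ℝ := IT.dist w (fun ω => (A ω, C ω)) with hqAC
  set qBC : β × γ → ℝ := IT.dist w (fun ω => (B ω, C ω)) with hqBC
  set qC : γ → ℝ := IT.dist w C with hqC
  -- nonnegativity
  have hq0 : ∀ x, 0 ≤ q x := fun x => dist_nonneg w hw _ x
  -- bounds
  have hAC_ge : ∀ a b c, q (a, b, c) ≤ qAC (a, c) := by
    intro a b c
    rw [hqAC, dist_marg_mid w A B C a c]
    exact Finset.single_le_sum (fun b' _ => hq0 (a, b', c)) (Finset.mem_univ b)
  have hBC_ge : ∀ a b c, q (a, b, c) ≤ qBC (b, c) := by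
    intro a b c
    rw [hqBC, dist_marg_fst w A B C b c]
    exact Finset.single_le_sum (fun a' _ => hq0 (a', b, c)) (Finset.mem_univ a)
  have hBC0 : ∀ y, 0 ≤ qBC y := fun y => dist_nonneg w hw _ y
  have hC_ge : ∀ b c, qBC (b, c) ≤ qC c := by
    intro b c
    rw [hqC, dist_marg_pair w B C c]
    exact Finset.single_le_sum (fun b' _ => hBC0 (b', c)) (Finset.mem_univ b)
  -- key pointwise identity
  have key : ∀ x : α × β × γ,
      q x * Real.logb 2 (q x) + q x * Real.logb 2 (qC x.2.2)
        - q x * Real.logb 2 (qAC (x.1, x.2.2)) - q x * Real.logb 2 (qBC x.2) = 0 := by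
    rintro ⟨a, b, c⟩
    rcases eq_or_lt_of_le (hq0 (a, b, c)) with h0 | hpos
    · simp [← h0]
    · have hAC : 0 < qAC (a, c) := lt_of_lt_of_le hpos (hAC_ge a b c)
      have hBC : 0 < qBC (b, c) := lt_of_lt_of_le hpos (hBC_ge a b c)
      have hC : 0 < qC c := lt_of_lt_of_le hBC (hC_ge b c)
      have hmul : q (a, b, c) * qC c = qAC (a, c) * qBC (b, c) := hfac a b c
      have hlog : Real.logb 2 (q (a, b, c)) + Real.logb 2 (qC c)
          = Real.logb 2 (qAC (a, c)) + Real.logb 2 (qBC (b, c)) := by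
        rw [← Real.logb_mul (ne_of_gt hpos) (ne_of_gt hC),
            ← Real.logb_mul (ne_of_gt hAC) (ne_of_gt hBC), hmul]
      have : q (a, b, c) * (Real.logb 2 (q (a, b, c)) + Real.logb 2 (qC c)
          - (Real.logb 2 (qAC (a, c)) + Real.logb 2 (qBC (b, c)))) = 0 := by
        rw [hlog]; ring
      linarith [this, mul_add (q (a,b,c)) (Real.logb 2 (q (a,b,c))) (Real.logb 2 (qC c))]
  -- entropy expansions over the triple product
  have eAC : IT.H w (fun ω => (A ω, C ω))
      = -∑ x : α × β × γ, q x * Real.logb 2 (qAC (x.1, x.2.2)) := by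
    unfold IT.H
    rw [neg_inj, hq, hqAC]
    exact (sum_dist_comp w (fun ω => (A ω, B ω, C ω)) (fun x => (x.1, x.2.2))
      (fun y => Real.logb 2 (IT.dist w (fun ω => (A ω, C ω)) y))).symm
  have eC : IT.H w C = -∑ x : α × β × γ, q x * Real.logb 2 (qC x.2.2) := by
    unfold IT.H
    rw [neg_inj, hq, hqC]
    exact (sum_dist_comp w (fun ω => (A ω, B ω, C ω)) (fun x => x.2.2)
      (fun y => Real.logb 2 (IT.dist w C y))).symm
  have eBC : IT.H w (fun ω => (B ω, C ω))
      = -∑ x : α × β × γ, q x * Real.logb 2 (qBC x.2) := by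
    unfold IT.H
    rw [neg_inj, hq, hqBC]
    exact (sum_dist_comp w (fun ω => (A ω, B ω, C ω)) (fun x => x.2)
      (fun y => Real.logb 2 (IT.dist w (fun ω => (B ω, C ω)) y))).symm
  have eABC : IT.H w (fun ω => (A ω, B ω, C ω))
      = -∑ x : α × β × γ, q x * Real.logb 2 (q x) := by
    unfold IT.H
    rw [← hq]
  have hsum : ∑ x : α × β × γ,
      (q x * Real.logb 2 (q x) + q x * Real.logb 2 (qC x.2.2)
        - q x * Real.logb 2 (qAC (x.1, x.2.2)) - q x * Real.logb 2 (qBC x.2)) = 0 :=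
    Finset.sum_eq_zero fun x _ => key x
  rw [Finset.sum_sub_distrib, Finset.sum_sub_distrib, Finset.sum_add_distrib] at hsum
  show IT.condH w A C - IT.condH w A (fun ω => (B ω, C ω)) = 0
  unfold IT.condH
  rw [show (fun ω => (A ω, (B ω, C ω))) = (fun ω => (A ω, B ω, C ω)) from rfl]
  rw [eAC, eC, eABC, eBC]
  linarith


lemma iid_factor {n : ℕ} {X₀ B₀ : Type} [Fintype X₀] [Fintype B₀]
    {α : Type} [Fintype α]
    (Q : X₀ × B₀ → ℝ) (t : Fin n) (A : (Fin n → X₀ × B₀) → α)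
    (hA : ∀ ω ω' : Fin n → X₀ × B₀, (ω t).1 = (ω' t).1 →
      (∀ s, s ≠ t → ω s = ω' s) → A ω = A ω')
    (a : α) (b : B₀) (c : X₀) :
    IT.dist (iidW Q n) (fun ω => (A ω, (ω t).2, (ω t).1)) (a, b, c)
        * IT.dist (iidW Q n) (fun ω => (ω t).1) c
      = IT.dist (iidW Q n) (fun ω => (A ω, (ω t).1)) (a, c)
        * IT.dist (iidW Q n) (fun ω => ((ω t).2, (ω t).1)) (b, c) := by
  classical
  set e := Equiv.funSplitAt t (X₀ × B₀) with he
  -- evaluation facts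
  have het : ∀ (v : X₀ × B₀) (ρ : {j : Fin n // j ≠ t} → X₀ × B₀), e.symm (v, ρ) t = v := by
    intro v ρ; simp [he]
  have hene : ∀ (v : X₀ × B₀) (ρ : {j : Fin n // j ≠ t} → X₀ × B₀) (s : Fin n) (h : s ≠ t),
      e.symm (v, ρ) s = ρ ⟨s, h⟩ := by
    intro v ρ s h; simp [he, h]
  -- weight splits
  have hw : ∀ (v : X₀ × B₀) (ρ : {j : Fin n // j ≠ t} → X₀ × B₀),
      iidW Q n (e.symm (v, ρ)) = Q v * ∏ j, Q (ρ j) := by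
    intro v ρ
    unfold iidW
    rw [Fintype.prod_eq_mul_prod_compl t]
    congr 1
    · rw [het]
    · rw [Finset.prod_subtype ({t}ᶜ : Finset (Fin n)) (p := fun s => s ≠ t)
        (fun x => by simp) (fun s => Q (e.symm (v, ρ) s))]
      exact Finset.prod_congr rfl fun j _ => by rw [hene v ρ j.1 j.2]
  -- generic transport of dist along e
  have hdist : ∀ {α' : Type} [Fintype α'] (X : (Fin n → X₀ × B₀) → α') (x : α'),
      IT.dist (iidW Q n) X x
        = ∑ v : X₀ × B₀, ∑ ρ : {j : Fin n // j ≠ t} → X₀ × B₀,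
            (if X (e.symm (v, ρ)) = x then Q v * ∏ j, Q (ρ j) else 0) := by
    intro α' _ X x
    unfold IT.dist
    rw [← Equiv.sum_comp e.symm (fun ω => if X ω = x then iidW Q n ω else 0),
      Fintype.sum_prod_type]
    refine Finset.sum_congr rfl fun v _ => Finset.sum_congr rfl fun ρ _ => ?_
    rw [hw v ρ]
  -- abbreviations
  set W : ℝ := ∑ ρ : {j : Fin n // j ≠ t} → X₀ × B₀, ∏ j, Q (ρ j) with hW
  set G : α → X₀ → ℝ := fun a' c' =>
    ∑ ρ : {j : Fin n // j ≠ t} → X₀ × B₀,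
      (if A (e.symm ((c', b), ρ)) = a' then ∏ j, Q (ρ j) else 0) with hG
  set QX : X₀ → ℝ := fun c' => ∑ b' : B₀, Q (c', b') with hQX
  -- A depends only on the first component at t
  have hAe : ∀ (v : X₀ × B₀) (ρ : {j : Fin n // j ≠ t} → X₀ × B₀),
      A (e.symm (v, ρ)) = A (e.symm ((v.1, b), ρ)) := by
    intro v ρ
    refine hA _ _ ?_ ?_
    · rw [het, het]
    · intro s hs
      rw [hene _ _ _ hs, hene _ _ _ hs]
  -- helper to pull a constant out of the indicator sum
  have pull : ∀ (P : ({j : Fin n // j ≠ t} → X₀ × B₀) → Prop) (r : ℝ),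
      ∑ ρ : {j : Fin n // j ≠ t} → X₀ × B₀, (if P ρ then r * ∏ j, Q (ρ j) else 0)
        = r * ∑ ρ : {j : Fin n // j ≠ t} → X₀ × B₀, (if P ρ then ∏ j, Q (ρ j) else 0) := by
    intro P r
    rw [Finset.mul_sum]
    exact Finset.sum_congr rfl fun ρ _ => by rw [mul_ite, mul_zero]
  -- the four distribution computations
  have d1 : IT.dist (iidW Q n) (fun ω => (A ω, (ω t).2, (ω t).1)) (a, b, c)
      = Q (c, b) * G a c := by
    rw [hdist]
    simp only [het]
    rw [Fintype.sum_prod_type]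
    rw [Finset.sum_eq_single_of_mem c (Finset.mem_univ c) (fun v1 _ hv1 =>
      Finset.sum_eq_zero fun v2 _ => Finset.sum_eq_zero fun ρ _ => if_neg fun hcond => by
        rw [Prod.mk.injEq, Prod.mk.injEq] at hcond
        exact hv1 hcond.2.2)]
    rw [Finset.sum_eq_single_of_mem b (Finset.mem_univ b) (fun v2 _ hv2 =>
      Finset.sum_eq_zero fun ρ _ => if_neg fun hcond => by
        rw [Prod.mk.injEq, Prod.mk.injEq] at hcond
        exact hv2 hcond.2.1)]
    have : ∀ ρ : {j : Fin n // j ≠ t} → X₀ × B₀,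
        ((A (e.symm ((c, b), ρ)), b, c) = (a, b, c)) ↔ (A (e.symm ((c, b), ρ)) = a) := by
      intro ρ; simp
    rw [Finset.sum_congr rfl fun ρ _ => by rw [if_congr (this ρ) rfl rfl]]
    rw [pull, hG]
  have d2 : IT.dist (iidW Q n) (fun ω => (ω t).1) c = QX c * W := by
    rw [hdist]
    simp only [het]
    rw [Fintype.sum_prod_type]
    rw [Finset.sum_eq_single_of_mem c (Finset.mem_univ c) (fun v1 _ hv1 =>
      Finset.sum_eq_zero fun v2 _ => Finset.sum_eq_zero fun ρ _ => if_neg fun hcond => hv1 hcond)]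
    rw [hQX, hW, Finset.sum_mul]
    refine Finset.sum_congr rfl fun v2 _ => ?_
    rw [Finset.mul_sum]
    exact Finset.sum_congr rfl fun ρ _ => by rw [if_pos rfl]
  have d3 : IT.dist (iidW Q n) (fun ω => (A ω, (ω t).1)) (a, c) = QX c * G a c := by
    rw [hdist]
    simp only [het]
    rw [Fintype.sum_prod_type]
    rw [Finset.sum_eq_single_of_mem c (Finset.mem_univ c) (fun v1 _ hv1 =>
      Finset.sum_eq_zero fun v2 _ => Finset.sum_eq_zero fun ρ _ => if_neg fun hcond => by
        rw [Prod.mk.injEq] at hcond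
        exact hv1 hcond.2)]
    have step : ∀ (v2 : B₀) (ρ : {j : Fin n // j ≠ t} → X₀ × B₀),
        ((A (e.symm ((c, v2), ρ)), c) = (a, c)) ↔ (A (e.symm ((c, b), ρ)) = a) := by
      intro v2 ρ
      rw [hAe (c, v2) ρ]
      simp
    rw [Finset.sum_congr rfl fun v2 _ =>
      Finset.sum_congr rfl fun ρ _ => by rw [if_congr (step v2 ρ) rfl rfl]]
    rw [Finset.sum_congr rfl fun v2 _ => pull _ (Q (c, v2)), ← Finset.sum_mul, hQX, hG]
  have d4 : IT.dist (iidW Q n) (fun ω => ((ω t).2, (ω t).1)) (b, c) = Q (c, b) * W := by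
    rw [hdist]
    simp only [het]
    rw [Fintype.sum_prod_type]
    rw [Finset.sum_eq_single_of_mem c (Finset.mem_univ c) (fun v1 _ hv1 =>
      Finset.sum_eq_zero fun v2 _ => Finset.sum_eq_zero fun ρ _ => if_neg fun hcond => by
        rw [Prod.mk.injEq] at hcond
        exact hv1 hcond.2)]
    rw [Finset.sum_eq_single_of_mem b (Finset.mem_univ b) (fun v2 _ hv2 =>
      Finset.sum_eq_zero fun ρ _ => if_neg fun hcond => by
        rw [Prod.mk.injEq] at hcond
        exact hv2 hcond.1)]
    rw [hW, Finset.mul_sum]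
    exact Finset.sum_congr rfl fun ρ _ => by rw [if_pos rfl]
  rw [d1, d2, d3, d4]
  ring


end MyAux


/-- **Lemma (interactive encoding of two nodes), item 1:**
`(J_x^1, X_{[1:t-1]}, Y_{[t+1:n]}) -∘- X_t -∘- (Y_t, Z_t)`. -/
theorem two_node_interactive_markov_item1
    {XA YA ZA : Type} [Fintype XA] [Fintype YA] [Fintype ZA]
    (p : XA × YA × ZA → ℝ) (hp : IsPMF p)
    {n K : ℕ} (mx my : Fin K → ℕ)
    (Jx : (l : Fin K) → (Fin n → XA × YA × ZA) → Fin (mx l))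
    (Jy : (l : Fin K) → (Fin n → XA × YA × ZA) → Fin (my l))
    -- J_x^l = f_x^l(Xⁿ, J_x^{[1:l-1]}, J_y^{[1:l-1]})
    (hJx : ∀ l : Fin K, ∃ f : (Fin n → XA) →
        ((k : Fin K) → k.val < l.val → Fin (mx k)) →
        ((k : Fin K) → k.val < l.val → Fin (my k)) → Fin (mx l),
      ∀ ω, Jx l ω = f (fun t => (ω t).1) (fun k _ => Jx k ω) (fun k _ => Jy k ω))
    -- J_y^l = f_y^l(Yⁿ, J_x^{[1:l]}, J_y^{[1:l-1]})
    (hJy : ∀ l : Fin K, ∃ f : (Fin n → YA) →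
        ((k : Fin K) → k.val ≤ l.val → Fin (mx k)) →
        ((k : Fin K) → k.val < l.val → Fin (my k)) → Fin (my l),
      ∀ ω, Jy l ω = f (fun t => (ω t).2.1) (fun k _ => Jx k ω) (fun k _ => Jy k ω))
    (hK : 0 < K) :
    ∀ t : Fin n,
      IT.condMutInfo (iidW p n)
        (fun ω => (Jx ⟨0, hK⟩ ω, below t.val (fun s => (ω s).1),
          above t.val (fun s => (ω s).2.1)))
        (fun ω => ((ω t).2.1, (ω t).2.2))
        (fun ω => (ω t).1) = 0 := by
  intro t
  have hw : ∀ ω : Fin n → XA × YA × ZA, 0 ≤ iidW p n ω := fun ω =>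
    Finset.prod_nonneg fun s _ => hp.1 _
  have hA : ∀ ω ω' : Fin n → XA × YA × ZA, (ω t).1 = (ω' t).1 →
      (∀ s, s ≠ t → ω s = ω' s) →
      (fun ω => (Jx ⟨0, hK⟩ ω, below t.val (fun s => (ω s).1),
        above t.val (fun s => (ω s).2.1))) ω
      = (fun ω => (Jx ⟨0, hK⟩ ω, below t.val (fun s => (ω s).1),
        above t.val (fun s => (ω s).2.1))) ω' := by
    intro ω ω' h1 h2
    obtain ⟨f, hf⟩ := hJx ⟨0, hK⟩
    have hx : (fun s => (ω s).1) = (fun s => (ω' s).1) := by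
      funext s
      by_cases hs : s = t
      · subst hs; exact h1
      · rw [h2 s hs]
    have hg : (fun (k : Fin K) (_ : k.val < (⟨0, hK⟩ : Fin K).val) => Jx k ω)
        = (fun k _ => Jx k ω') :=
      funext fun k => funext fun h => absurd h (Nat.not_lt_zero _)
    have hh : (fun (k : Fin K) (_ : k.val < (⟨0, hK⟩ : Fin K).val) => Jy k ω)
        = (fun k _ => Jy k ω') :=
      funext fun k => funext fun h => absurd h (Nat.not_lt_zero _)
    have hJ : Jx ⟨0, hK⟩ ω = Jx ⟨0, hK⟩ ω' := by
      rw [hf ω, hf ω', hx, hg, hh]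
    have hab : above t.val (fun s => (ω s).2.1) = above t.val (fun s => (ω' s).2.1) := by
      funext s
      unfold above
      by_cases hs : t.val < s.val
      · have hne : s ≠ t := fun he => by subst he; exact lt_irrefl _ hs
        rw [if_pos hs, if_pos hs]
        show some ((ω s).2.1) = some ((ω' s).2.1)
        rw [h2 s hne]
      · rw [if_neg hs, if_neg hs]
    have hbel : below t.val (fun s => (ω s).1) = below t.val (fun s => (ω' s).1) := by
      rw [hx]
    simp only
    rw [hJ, hbel, hab]
  exact MyAux.condMutInfo_eq_zero_of_factor (iidW p n) hw _ _ _
    (fun a b c => MyAux.iid_factor p t _ hA a b c)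
end
end

section
/- (Markov chains induced by interactive encoding of two nodes, item 3.) For every t ∈ {1,…,n} and every l ∈ {1,…,K}, the Markov chain (J_y^l, Y_{[1:t-1]}) −∘− (J_x^{[1:l]}, J_y^{[1:l-1]}, X_{[1:t-1]}, Y_{[t:n]}) −∘− (X_t, Z_t) holds; equivalently, I(J_y^l, Y_{[1:t-1]} ; X_t, Z_t | J_x^{[1:l]}, J_y^{[1:l-1]}, X_{[1:t-1]}, Y_{[t:n]}) = 0. -/
noncomputable section

open IT

/-!
Split a sample `ω` of the i.i.d. sequence into its past `ω_{<t}` and its future `ω_{≥t}`; under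
the product weight the two halves are independent. Whether a sample reproduces a given transcript
of the interactive protocol is a rectangle condition: node X's encoders must reproduce it from
`Xⁿ`, node Y's from `Yⁿ`. Once `X_{<t}` and `Y_{≥t}` are fixed as well, `Xⁿ` is determined by the
future and `Yⁿ` by the past, so every level set of the conditioning variable is a rectangle
(past condition) ∧ (future condition), on which `(J_y^l, Y_{<t})` depends only on the past and
`(X_t, Z_t)` only on the future. Exchanging the pasts of two samples preserves their joint weight,
which gives `p(a,b,c) p(c) = p(a,c) p(b,c)`.
-/
namespace IT

variable {Ω : Type*} [Fintype Ω] {α β γ : Type*} [Fintype α] [Fintype β] [Fintype γ]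

lemma sum_dist_mul (w : Ω → ℝ) (X : Ω → α) (ψ : α → ℝ) :
    ∑ a, dist w X a * ψ a = ∑ ω, w ω * ψ (X ω) := by
  classical
  simp only [dist, Finset.sum_mul, ite_mul, zero_mul]
  rw [Finset.sum_comm]
  simp

lemma H_eq_sum (w : Ω → ℝ) (X : Ω → α) :
    H w X = -∑ ω, w ω * Real.logb 2 (dist w X (X ω)) := by
  rw [H, sum_dist_mul w X fun a => Real.logb 2 (dist w X a)]

lemma le_dist_self {w : Ω → ℝ} (hw : ∀ ω, 0 ≤ w ω) (X : Ω → α) (ω : Ω) :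
    w ω ≤ dist w X (X ω) := by
  classical
  unfold dist
  simpa using Finset.single_le_sum (f := fun ω' => if X ω' = X ω then w ω' else 0)
    (fun ω' _ => by split_ifs <;> simp [hw]) (Finset.mem_univ ω)

theorem condMutInfo_eq_zero_of_factorization {w : Ω → ℝ} (hw : ∀ ω, 0 ≤ w ω)
    (A : Ω → α) (B : Ω → β) (C : Ω → γ)
    (h : ∀ ω, dist w (fun ω => (A ω, B ω, C ω)) (A ω, B ω, C ω) * dist w C (C ω) =
      dist w (fun ω => (A ω, C ω)) (A ω, C ω) * dist w (fun ω => (B ω, C ω)) (B ω, C ω)) :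
    condMutInfo w A B C = 0 := by
  have hlog : ∀ ω, w ω * Real.logb 2 (dist w (fun ω => (A ω, B ω, C ω)) (A ω, B ω, C ω)) =
      w ω * (Real.logb 2 (dist w (fun ω => (A ω, C ω)) (A ω, C ω)) +
        Real.logb 2 (dist w (fun ω => (B ω, C ω)) (B ω, C ω)) - Real.logb 2 (dist w C (C ω))) := by
    intro ω
    rcases (hw ω).eq_or_lt with h0 | hpos
    · simp [← h0]
    have hAC := hpos.trans_le (le_dist_self hw (fun ω => (A ω, C ω)) ω)
    have hBC := hpos.trans_le (le_dist_self hw (fun ω => (B ω, C ω)) ω)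
    have hC := hpos.trans_le (le_dist_self hw C ω)
    rw [eq_div_of_mul_eq hC.ne' (h ω), Real.logb_div (by positivity) hC.ne',
      Real.logb_mul hAC.ne' hBC.ne']
  simp only [condMutInfo, condH, H_eq_sum, hlog, mul_add, mul_sub, Finset.sum_add_distrib,
    Finset.sum_sub_distrib]
  ring

lemma pr_congr (w : Ω → ℝ) {E F : Ω → Prop} (h : ∀ ω, E ω ↔ F ω) : pr w E = pr w F := by
  classical
  simp only [pr]
  exact Finset.sum_congr rfl fun ω _ => if_congr (h ω) rfl rfl

end IT

section Product

variable {γ : Type*} {n : ℕ}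

lemma iidW_piecewise_mul_iidW_piecewise (p : γ → ℝ) (S : Set (Fin n)) [DecidablePred (· ∈ S)]
    (ω ω' : Fin n → γ) :
    iidW p n (S.piecewise ω ω') * iidW p n (S.piecewise ω' ω) = iidW p n ω * iidW p n ω' := by
  simp only [iidW, ← Finset.prod_mul_distrib]
  refine Finset.prod_congr rfl fun s _ => ?_
  by_cases hs : s ∈ S <;> simp [hs, mul_comm]

theorem pr_and_mul_pr_and_comm [Fintype γ] (p : γ → ℝ) (S : Set (Fin n))
    {E E' F F' : (Fin n → γ) → Prop} (hE : DependsOn E S) (hE' : DependsOn E' S)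
    (hF : DependsOn F Sᶜ) (hF' : DependsOn F' Sᶜ) :
    pr (iidW p n) (fun ω => E ω ∧ F ω) * pr (iidW p n) (fun ω => E' ω ∧ F' ω) =
      pr (iidW p n) (fun ω => E ω ∧ F' ω) * pr (iidW p n) (fun ω => E' ω ∧ F ω) := by
  classical
  have hswap : Function.Involutive
      fun x : (Fin n → γ) × (Fin n → γ) => (S.piecewise x.1 x.2, S.piecewise x.2 x.1) := by
    rintro ⟨ω, ω'⟩
    ext i <;> by_cases hi : i ∈ S <;> simp [hi]
  simp only [pr, Finset.sum_mul_sum, ← Finset.sum_product', ite_zero_mul_ite_zero]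
  refine Fintype.sum_equiv hswap.toPerm _ _ fun ⟨ω, ω'⟩ => ?_
  have hl : ∀ ω ω' : Fin n → γ, ∀ i ∈ S, S.piecewise ω ω' i = ω i :=
    fun ω ω' _ hi => Set.piecewise_eqOn S ω ω' hi
  have hr : ∀ ω ω' : Fin n → γ, ∀ i ∈ Sᶜ, S.piecewise ω ω' i = ω' i :=
    fun ω ω' _ hi => Set.piecewise_eqOn_compl S ω ω' hi
  simp only [Function.Involutive.coe_toPerm, hE (hl ω ω'), hE' (hl ω' ω), hF (hr ω' ω),
    hF' (hr ω ω'), iidW_piecewise_mul_iidW_piecewise]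
  exact if_congr (by tauto) rfl rfl

end Product

section Rectangle

variable {γ : Type*} [Fintype γ] {n : ℕ} {α β δ : Type*} [Fintype α] [Fintype β] [Fintype δ]

theorem condMutInfo_iidW_eq_zero_of_rectangle {p : γ → ℝ} (hp : ∀ g, 0 ≤ p g) (S : Set (Fin n))
    (A : (Fin n → γ) → α) (B : (Fin n → γ) → β) (C : (Fin n → γ) → δ)
    (hC : ∀ ω₀, ∃ E F : (Fin n → γ) → Prop, DependsOn E S ∧ DependsOn F Sᶜ ∧
      ∀ ω, C ω = C ω₀ ↔ E ω ∧ F ω)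
    (hA : ∀ ω₀, ∃ A' : (Fin n → γ) → α, DependsOn A' S ∧ ∀ ω, C ω = C ω₀ → A ω = A' ω)
    (hB : ∀ ω₀, ∃ B' : (Fin n → γ) → β, DependsOn B' Sᶜ ∧ ∀ ω, C ω = C ω₀ → B ω = B' ω) :
    condMutInfo (iidW p n) A B C = 0 := by
  refine condMutInfo_eq_zero_of_factorization (fun ω => Finset.prod_nonneg fun s _ => hp _)
    A B C fun ω₀ => ?_
  obtain ⟨E, F, hE, hF, hCEF⟩ := hC ω₀
  obtain ⟨A', hA', hAA'⟩ := hA ω₀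
  obtain ⟨B', hB', hBB'⟩ := hB ω₀
  have hEA : DependsOn (fun ω => E ω ∧ A' ω = A ω₀) S := fun x y h => by
    simp only [hE h, hA' h]
  have hFB : DependsOn (fun ω => F ω ∧ B' ω = B ω₀) Sᶜ := fun x y h => by
    simp only [hF h, hB' h]
  have hAC : ∀ ω, A ω = A ω₀ ∧ C ω = C ω₀ ↔ (E ω ∧ A' ω = A ω₀) ∧ F ω := fun ω => by
    constructor
    · rintro ⟨ha, hc⟩
      exact ⟨⟨((hCEF ω).1 hc).1, hAA' ω hc ▸ ha⟩, ((hCEF ω).1 hc).2⟩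
    · rintro ⟨⟨he, ha⟩, hf⟩
      have hc := (hCEF ω).2 ⟨he, hf⟩
      exact ⟨(hAA' ω hc).trans ha, hc⟩
  have hBC : ∀ ω, B ω = B ω₀ ∧ C ω = C ω₀ ↔ E ω ∧ F ω ∧ B' ω = B ω₀ := fun ω => by
    constructor
    · rintro ⟨hb, hc⟩
      exact ⟨((hCEF ω).1 hc).1, ((hCEF ω).1 hc).2, hBB' ω hc ▸ hb⟩
    · rintro ⟨he, hf, hb⟩
      have hc := (hCEF ω).2 ⟨he, hf⟩
      exact ⟨(hBB' ω hc).trans hb, hc⟩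
  calc _ = pr (iidW p n) (fun ω => (E ω ∧ A' ω = A ω₀) ∧ F ω ∧ B' ω = B ω₀) *
        pr (iidW p n) (fun ω => E ω ∧ F ω) := by
        congr 1
        · refine pr_congr _ fun ω => ?_
          simp only [Prod.mk.injEq]
          have := hAC ω; have := hBC ω; tauto
        · exact pr_congr _ fun ω => hCEF ω
    _ = pr (iidW p n) (fun ω => (E ω ∧ A' ω = A ω₀) ∧ F ω) *
        pr (iidW p n) (fun ω => E ω ∧ F ω ∧ B' ω = B ω₀) :=
      pr_and_mul_pr_and_comm p S hEA hE hFB hF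
    _ = _ := by
        congr 1 <;> refine pr_congr _ fun ω => ?_ <;> simp only [Prod.mk.injEq]
        exacts [(hAC ω).symm, (hBC ω).symm]

end Rectangle

section Coordinates

variable {ι : Type*} {n : ℕ} {γ δ : Type*}

lemma below_eq_below_iff (t : Fin n) {x y : Fin n → γ} :
    below t.val x = below t.val y ↔ ∀ s ∈ Set.Iio t, x s = y s := by
  simp only [funext_iff, below, Set.mem_Iio, Fin.lt_def]
  refine forall_congr' fun s => ?_
  by_cases hs : s.val < t.val <;> simp [hs]

lemma fromIdx_eq_fromIdx_iff (t : Fin n) {x y : Fin n → γ} :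
    fromIdx t.val x = fromIdx t.val y ↔ ∀ s ∈ (Set.Iio t)ᶜ, x s = y s := by
  simp only [funext_iff, fromIdx, Set.mem_compl_iff, Set.mem_Iio, not_lt, Fin.le_def]
  refine forall_congr' fun s => ?_
  by_cases hs : t.val ≤ s.val <;> simp [hs]

lemma trunc_eq_trunc_iff {K : ℕ} {M : Fin K → Type*} (m : ℕ) (f g : (k : Fin K) → M k) :
    trunc m f = trunc m g ↔ ∀ k : Fin K, k.val < m → f k = g k := by
  simp only [funext_iff, trunc]
  refine forall_congr' fun k => ?_
  by_cases hk : k.val < m <;> simp [hk]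

lemma comp_piecewise_eq_left (S : Set ι) [DecidablePred (· ∈ S)] (g : γ → δ)
    {x y : ι → γ} (h : ∀ s ∈ Sᶜ, g (x s) = g (y s)) :
    (fun s => g (S.piecewise x y s)) = fun s => g (x s) := by
  funext s
  by_cases hs : s ∈ S
  · simp [hs]
  · simp [hs, h s hs]

lemma comp_piecewise_eq_right (S : Set ι) [DecidablePred (· ∈ S)] (g : γ → δ)
    {x y : ι → γ} (h : ∀ s ∈ S, g (x s) = g (y s)) :
    (fun s => g (S.piecewise x y s)) = fun s => g (y s) := by
  funext s
  by_cases hs : s ∈ S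
  · simp [hs, h s hs]
  · simp [hs]

lemma dependsOn_piecewise_left (S : Set ι) [DecidablePred (· ∈ S)] (y : ι → γ) :
    DependsOn (fun x : ι → γ => S.piecewise x y) S := fun x x' h => by
  funext s
  by_cases hs : s ∈ S <;> simp [hs, h s]

lemma dependsOn_piecewise_right (S : Set ι) [DecidablePred (· ∈ S)] (x : ι → γ) :
    DependsOn (fun y : ι → γ => S.piecewise x y) Sᶜ := fun y y' h => by
  funext s
  by_cases hs : s ∈ S <;> simp [hs, h s]

end Coordinates

section Transcript

variable {Ω α β : Type*} {K : ℕ} {Mx My : Fin K → Type*}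
  {fx : (k : Fin K) → α → ((k' : Fin K) → k'.val < k.val → Mx k') →
    ((k' : Fin K) → k'.val < k.val → My k') → Mx k}
  {fy : (k : Fin K) → β → ((k' : Fin K) → k'.val ≤ k.val → Mx k') →
    ((k' : Fin K) → k'.val < k.val → My k') → My k}
  {X : Ω → α} {Y : Ω → β} {Jx : (k : Fin K) → Ω → Mx k} {Jy : (k : Fin K) → Ω → My k}
  {jx : (k : Fin K) → Mx k} {jy : (k : Fin K) → My k} {l : ℕ} {ω : Ω}

variable (fx fy jx jy l) in
def XConsistent (x : α) : Prop :=
  ∀ k : Fin K, k.val ≤ l → fx k x (fun k' _ => jx k') (fun k' _ => jy k') = jx k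

variable (fx fy jx jy l) in
def YConsistent (y : β) : Prop :=
  ∀ k : Fin K, k.val < l → fy k y (fun k' _ => jx k') (fun k' _ => jy k') = jy k

lemma message_x_eq_of_transcript_eq
    (hJx : ∀ k ω, Jx k ω = fx k (X ω) (fun k' _ => Jx k' ω) (fun k' _ => Jy k' ω))
    (hx : ∀ k : Fin K, k.val ≤ l → Jx k ω = jx k) (hy : ∀ k : Fin K, k.val < l → Jy k ω = jy k)
    (k : Fin K) (hk : k.val ≤ l) :
    Jx k ω = fx k (X ω) (fun k' _ => jx k') (fun k' _ => jy k') := by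
  rw [hJx]
  congr 1 <;> funext k' hk' <;> [exact hx k' (by omega); exact hy k' (by omega)]

lemma message_y_eq_of_transcript_eq
    (hJy : ∀ k ω, Jy k ω = fy k (Y ω) (fun k' _ => Jx k' ω) (fun k' _ => Jy k' ω))
    (hx : ∀ k : Fin K, k.val ≤ l → Jx k ω = jx k) (hy : ∀ k : Fin K, k.val < l → Jy k ω = jy k)
    (k : Fin K) (hk : k.val ≤ l) :
    Jy k ω = fy k (Y ω) (fun k' _ => jx k') (fun k' _ => jy k') := by
  rw [hJy]
  congr 1 <;> funext k' hk' <;> [exact hx k' (by omega); exact hy k' (by omega)]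

theorem transcript_eq_iff_consistent
    (hJx : ∀ k ω, Jx k ω = fx k (X ω) (fun k' _ => Jx k' ω) (fun k' _ => Jy k' ω))
    (hJy : ∀ k ω, Jy k ω = fy k (Y ω) (fun k' _ => Jx k' ω) (fun k' _ => Jy k' ω)) :
    ((∀ k : Fin K, k.val ≤ l → Jx k ω = jx k) ∧ (∀ k : Fin K, k.val < l → Jy k ω = jy k)) ↔
      XConsistent fx jx jy l (X ω) ∧ YConsistent fy jx jy l (Y ω) := by
  constructor
  · rintro ⟨hx, hy⟩
    exact ⟨fun k hk => (message_x_eq_of_transcript_eq hJx hx hy k hk).symm.trans (hx k hk),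
      fun k hk => (message_y_eq_of_transcript_eq hJy hx hy k hk.le).symm.trans (hy k hk)⟩
  · rintro ⟨hX, hY⟩
    -- strong induction on the round, each `J_x^k` before `J_y^k`
    suffices ∀ m : ℕ, ∀ k : Fin K, k.val = m →
        (k.val ≤ l → Jx k ω = jx k) ∧ (k.val < l → Jy k ω = jy k) from
      ⟨fun k => (this k.val k rfl).1, fun k => (this k.val k rfl).2⟩
    intro m
    induction m using Nat.strong_induction_on with
    | _ m ih =>
      rintro k rfl
      have hxk : k.val ≤ l → Jx k ω = jx k := fun hk => by
        rw [hJx, ← hX k hk]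
        congr 1 <;> funext k' hk' <;>
          [exact (ih _ hk' k' rfl).1 (by omega); exact (ih _ hk' k' rfl).2 (by omega)]
      refine ⟨hxk, fun hk => ?_⟩
      rw [hJy, ← hY k hk]
      congr 1 <;> funext k' hk'
      · rcases hk'.lt_or_eq with hlt | heq
        · exact (ih _ hlt k' rfl).1 (by omega)
        · exact Fin.ext heq ▸ hxk (by omega)
      · exact (ih _ hk' k' rfl).2 (by omega)

end Transcript

section TwoNode

variable {XA YA ZA : Type*} {n K : ℕ} {Mx My : Fin K → Type*}
  {fx : (k : Fin K) → (Fin n → XA) → ((k' : Fin K) → k'.val < k.val → Mx k') →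
    ((k' : Fin K) → k'.val < k.val → My k') → Mx k}
  {fy : (k : Fin K) → (Fin n → YA) → ((k' : Fin K) → k'.val ≤ k.val → Mx k') →
    ((k' : Fin K) → k'.val < k.val → My k') → My k}
  {Jx : (k : Fin K) → (Fin n → XA × YA × ZA) → Mx k}
  {Jy : (k : Fin K) → (Fin n → XA × YA × ZA) → My k}

variable (Jx Jy) in
/-- The middle term `(J_x^{[1:l+1]}, J_y^{[1:l]}, X_{[1:t]}, Y_{[t+1:n]})` of the chain, with
`t` and `l` counted from `0`. -/
def chainMiddle (t : Fin n) (l : ℕ) (ω : Fin n → XA × YA × ZA) :=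
  (trunc (l + 1) (fun k => Jx k ω), trunc l (fun k => Jy k ω),
    below t.val (fun s => (ω s).1), fromIdx t.val (fun s => (ω s).2.1))

lemma chainMiddle_eq_iff (t : Fin n) (l : ℕ) (ω ω₀ : Fin n → XA × YA × ZA) :
    chainMiddle Jx Jy t l ω = chainMiddle Jx Jy t l ω₀ ↔
      ((∀ k : Fin K, k.val ≤ l → Jx k ω = Jx k ω₀) ∧ (∀ k : Fin K, k.val < l → Jy k ω = Jy k ω₀)) ∧
        (∀ s ∈ Set.Iio t, (ω s).1 = (ω₀ s).1) ∧ ∀ s ∈ (Set.Iio t)ᶜ, (ω s).2.1 = (ω₀ s).2.1 := by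
  simp only [chainMiddle, Prod.mk.injEq, trunc_eq_trunc_iff, Nat.lt_add_one_iff,
    below_eq_below_iff, fromIdx_eq_fromIdx_iff, and_assoc]

theorem exists_rectangle_chainMiddle_eq
    (hJx : ∀ k ω, Jx k ω = fx k (fun s => (ω s).1) (fun k' _ => Jx k' ω) (fun k' _ => Jy k' ω))
    (hJy : ∀ k ω, Jy k ω = fy k (fun s => (ω s).2.1) (fun k' _ => Jx k' ω) (fun k' _ => Jy k' ω))
    (t : Fin n) (l : ℕ) (ω₀ : Fin n → XA × YA × ZA) :
    ∃ E F : (Fin n → XA × YA × ZA) → Prop, DependsOn E (Set.Iio t) ∧ DependsOn F (Set.Iio t)ᶜ ∧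
      ∀ ω, chainMiddle Jx Jy t l ω = chainMiddle Jx Jy t l ω₀ ↔ E ω ∧ F ω := by
  set S := Set.Iio t
  refine ⟨fun ω => below t.val (fun s => (ω s).1) = below t.val (fun s => (ω₀ s).1) ∧
      YConsistent fy (fun k => Jx k ω₀) (fun k => Jy k ω₀) l fun s => (S.piecewise ω ω₀ s).2.1,
    fun ω => fromIdx t.val (fun s => (ω s).2.1) = fromIdx t.val (fun s => (ω₀ s).2.1) ∧
      XConsistent fx (fun k => Jx k ω₀) (fun k => Jy k ω₀) l fun s => (S.piecewise ω₀ ω s).1,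
    fun x y h => ?_, fun x y h => ?_, fun ω => ?_⟩
  · have hxy : below t.val (fun s => (x s).1) = below t.val (fun s => (y s).1) :=
      (below_eq_below_iff t).2 fun s hs => by rw [h s hs]
    have hpw : S.piecewise x ω₀ = S.piecewise y ω₀ := dependsOn_piecewise_left S ω₀ h
    simp only [hxy, hpw]
  · have hxy : fromIdx t.val (fun s => (x s).2.1) = fromIdx t.val (fun s => (y s).2.1) :=
      (fromIdx_eq_fromIdx_iff t).2 fun s hs => by rw [h s hs]
    have hpw : S.piecewise ω₀ x = S.piecewise ω₀ y := dependsOn_piecewise_right S ω₀ h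
    simp only [hxy, hpw]
  · simp only [chainMiddle_eq_iff, transcript_eq_iff_consistent hJx hJy, below_eq_below_iff,
      fromIdx_eq_fromIdx_iff]
    constructor
    · rintro ⟨⟨hX, hY⟩, hP, hQ⟩
      rw [comp_piecewise_eq_left S (fun g : XA × YA × ZA => g.2.1) hQ,
        comp_piecewise_eq_right S (fun g : XA × YA × ZA => g.1) fun s hs => (hP s hs).symm]
      exact ⟨⟨hP, hY⟩, hQ, hX⟩
    · rintro ⟨⟨hP, hY⟩, hQ, hX⟩
      rw [comp_piecewise_eq_left S (fun g : XA × YA × ZA => g.2.1) hQ] at hY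
      rw [comp_piecewise_eq_right S (fun g : XA × YA × ZA => g.1) fun s hs => (hP s hs).symm] at hX
      exact ⟨⟨hX, hY⟩, hP, hQ⟩

theorem exists_past_eq_of_chainMiddle_eq
    (hJy : ∀ k ω, Jy k ω = fy k (fun s => (ω s).2.1) (fun k' _ => Jx k' ω) (fun k' _ => Jy k' ω))
    (t : Fin n) (l : Fin K) (ω₀ : Fin n → XA × YA × ZA) :
    ∃ A' : (Fin n → XA × YA × ZA) → My l × (Fin n → Option YA), DependsOn A' (Set.Iio t) ∧
      ∀ ω, chainMiddle Jx Jy t l.val ω = chainMiddle Jx Jy t l.val ω₀ →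
        (Jy l ω, below t.val fun s => (ω s).2.1) = A' ω := by
  set S := Set.Iio t
  refine ⟨fun ω => (fy l (fun s => (S.piecewise ω ω₀ s).2.1) (fun k _ => Jx k ω₀)
      (fun k _ => Jy k ω₀), below t.val fun s => (ω s).2.1), fun x y h => ?_, fun ω hω => ?_⟩
  · have hxy : below t.val (fun s => (x s).2.1) = below t.val (fun s => (y s).2.1) :=
      (below_eq_below_iff t).2 fun s hs => by rw [h s hs]
    have hpw : S.piecewise x ω₀ = S.piecewise y ω₀ := dependsOn_piecewise_left S ω₀ h
    simp only [hxy, hpw]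
  · obtain ⟨⟨hx, hy⟩, -, hQ⟩ := (chainMiddle_eq_iff t l.val ω ω₀).1 hω
    simp only [comp_piecewise_eq_left S (fun g : XA × YA × ZA => g.2.1) hQ,
      message_y_eq_of_transcript_eq hJy hx hy l le_rfl]

end TwoNode

/-- **Lemma (interactive encoding of two nodes), item 3:**
`(J_y^l, Y_{[1:t-1]}) -∘- (J_x^{[1:l]}, J_y^{[1:l-1]}, X_{[1:t-1]}, Y_{[t:n]}) -∘- (X_t, Z_t)`. -/
theorem two_node_interactive_markov_item3
    {XA YA ZA : Type} [Fintype XA] [Fintype YA] [Fintype ZA]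
    (p : XA × YA × ZA → ℝ) (hp : IsPMF p)
    {n K : ℕ} (mx my : Fin K → ℕ)
    (Jx : (l : Fin K) → (Fin n → XA × YA × ZA) → Fin (mx l))
    (Jy : (l : Fin K) → (Fin n → XA × YA × ZA) → Fin (my l))
    -- J_x^l = f_x^l(Xⁿ, J_x^{[1:l-1]}, J_y^{[1:l-1]})
    (hJx : ∀ l : Fin K, ∃ f : (Fin n → XA) →
        ((k : Fin K) → k.val < l.val → Fin (mx k)) →
        ((k : Fin K) → k.val < l.val → Fin (my k)) → Fin (mx l),
      ∀ ω, Jx l ω = f (fun t => (ω t).1) (fun k _ => Jx k ω) (fun k _ => Jy k ω))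
    -- J_y^l = f_y^l(Yⁿ, J_x^{[1:l]}, J_y^{[1:l-1]})
    (hJy : ∀ l : Fin K, ∃ f : (Fin n → YA) →
        ((k : Fin K) → k.val ≤ l.val → Fin (mx k)) →
        ((k : Fin K) → k.val < l.val → Fin (my k)) → Fin (my l),
      ∀ ω, Jy l ω = f (fun t => (ω t).2.1) (fun k _ => Jx k ω) (fun k _ => Jy k ω))
    :
    ∀ (t : Fin n) (l : Fin K),
      IT.condMutInfo (iidW p n)
        (fun ω => (Jy l ω, below t.val (fun s => (ω s).2.1)))
        (fun ω => ((ω t).1, (ω t).2.2))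
        (fun ω => (trunc (l.val + 1) (fun k => Jx k ω), trunc l.val (fun k => Jy k ω),
          below t.val (fun s => (ω s).1), fromIdx t.val (fun s => (ω s).2.1))) = 0 := by
  intro t l
  choose fx hfx using hJx
  choose fy hfy using hJy
  exact condMutInfo_iidW_eq_zero_of_rectangle hp.1 (Set.Iio t) _ _ (chainMiddle Jx Jy t l.val)
    (exists_rectangle_chainMiddle_eq hfx hfy t l.val) (exists_past_eq_of_chainMiddle_eq hfy t l)
    fun _ => ⟨_, fun x y h => by simp only [h t (lt_irrefl t)], fun _ _ => rfl⟩
end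
end
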